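/- An oriented cycle C in KΔ_{T_α(A)} is nonzero in T_α(A) (i.e. Φ(C) ≠ 0) if and only if C is an elementary cycle or an α-revived cycle. -/

import Mathlib

noncomputable section
open Classical

/-- A quiver, given by a type of vertices and a family of types of arrows. -/
structure QD : Type 1 where
  V : Type
  Ar : V → V → Type

namespace QD

variable {Q : QD}

/-- Oriented paths in a quiver, composed from left to right. -/
inductive Path (Q : QD) : Q.V → Q.V → Type
  | nil (i : Q.V) : Path Q i i
  | cons {i j k : Q.V} (a : Q.Ar i j) (p : Path Q j k) : Path Q i k

namespace Path

/-- Concatenation of paths. -/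
def comp : {i j k : Q.V} → Path Q i j → Path Q j k → Path Q i k
  | _, _, _, nil _, q => q
  | _, _, _, cons a p, q => cons a (comp p q)

/-- Length of a path. -/
def length : {i j : Q.V} → Path Q i j → ℕ
  | _, _, nil _ => 0
  | _, _, cons _ p => length p + 1

end Path

/-- A path bundled with its endpoints. -/
def PathIn (Q : QD) : Type := Σ i : Q.V, Σ j : Q.V, Path Q i j

/-- Bundle a path with its endpoints. -/
def Path.sig {i j : Q.V} (p : Path Q i j) : PathIn Q := ⟨i, j, p⟩

/-- The arrow `a` occurs in the path `p`. -/
def Path.arrowMem {i j : Q.V} (a : Q.Ar i j) : {u v : Q.V} → Path Q u v → Prop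
  | _, _, Path.nil _ => False
  | _, _, @Path.cons _ u u' _ b p =>
      (⟨u, u', b⟩ : Σ i : Q.V, Σ j : Q.V, Q.Ar i j) = ⟨i, j, a⟩ ∨ Path.arrowMem a p

end QD

/-- The path algebra of a quiver over a field `K`, described axiomatically:
an algebra with a basis indexed by the paths, multiplying by concatenation. -/
structure PathAlg (K : Type) [Field K] (Q : QD) [Fintype Q.V] where
  P : Type
  [ringP : Ring P]
  [algP : Algebra K P]
  ι : {i j : Q.V} → Q.Path i j → P
  ι_comp : ∀ {i j k : Q.V} (p : Q.Path i j) (q : Q.Path j k), ι (p.comp q) = ι p * ι q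
  ι_ortho : ∀ {i j k l : Q.V} (p : Q.Path i j) (q : Q.Path k l), j ≠ k → ι p * ι q = 0
  sum_nil : (∑ i : Q.V, ι (QD.Path.nil i)) = 1
  li : LinearIndependent K (fun p : QD.PathIn Q => ι p.2.2)
  span_top : Submodule.span K (Set.range (fun p : QD.PathIn Q => ι p.2.2)) = ⊤

attribute [instance] PathAlg.ringP PathAlg.algP

section Main

variable (K : Type) [Field K] (Q : QD) [Fintype Q.V] [∀ i j : Q.V, Fintype (Q.Ar i j)]
variable (n : ℕ) (PA : PathAlg K Q)

/-- The relation whose `RingQuot` is the truncated quiver algebra `KΔ/R_Δ^n`: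
identify with `0` the image of every path of length at least `n`. -/
def truncRel : PA.P → PA.P → Prop := fun u v =>
  v = 0 ∧ ∃ p : QD.PathIn Q, n ≤ p.2.2.length ∧ u = PA.ι p.2.2

/-- The truncated quiver algebra `A = KΔ/R_Δ^n`. -/
abbrev TA : Type := RingQuot (truncRel K Q n PA)

/-- The class in `A = KΔ/R_Δ^n` of a path of `Δ`. -/
def cls {i j : Q.V} (p : Q.Path i j) : TA K Q n PA :=
  RingQuot.mkAlgHom K (truncRel K Q n PA) (PA.ι p)

/-- Index type for the canonical basis of the truncated algebra: paths of length `< n`. -/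
abbrev Short : Type := {p : QD.PathIn Q // p.2.2.length < n}

/-- The Jacobson radical of the truncated algebra. -/
def JradA : Ideal (TA K Q n PA) := Ideal.jacobson ⊥

/-- The socle of `A` as an `A`-bimodule: the two-sided annihilator of the radical,
viewed as a `K`-subspace. -/
def socA : Submodule K (TA K Q n PA) where
  carrier := {z | ∀ r ∈ JradA K Q n PA, r * z = 0 ∧ z * r = 0}
  add_mem' := by
    intro a b ha hb r hr
    exact ⟨by rw [mul_add, (ha r hr).1, (hb r hr).1, add_zero],
      by rw [add_mul, (ha r hr).2, (hb r hr).2, add_zero]⟩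
  zero_mem' := by intro r hr; simp
  smul_mem' := by
    intro c z hz r hr
    exact ⟨by rw [Algebra.mul_smul_comm, (hz r hr).1, smul_zero],
      by rw [Algebra.smul_mul_assoc, (hz r hr).2, smul_zero]⟩

variable (basA : Module.Basis (Short Q n) K (TA K Q n PA))

/-- The dual-basis functional `p̄^*` attached to a path `p` (zero if `p` is long). -/
def coordP (p : QD.PathIn Q) : Module.Dual K (TA K Q n PA) :=
  if h : p.2.2.length < n then basA.coord ⟨p, h⟩ else 0

variable (s : ℕ) [NeZero s] (w : ZMod s → Q.V) (x : ∀ i : ZMod s, Q.Ar (w i) (w (i + 1)))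

/-- The segment `x_i x_{i+1} ⋯ x_{i+m-1}` of the fixed basic cycle `γ = x_1 ⋯ x_s`. -/
def seg : (i : ZMod s) → (m : ℕ) → Q.Path (w i) (w (i + (m : ZMod s)))
  | i, 0 => cast (congrArg (fun v : ZMod s => Q.Path (w i) (w v)) (by push_cast; ring))
      (QD.Path.nil (w i))
  | i, m + 1 => cast (congrArg (fun v : ZMod s => Q.Path (w i) (w v)) (by push_cast; ring))
      (QD.Path.cons (x i) (seg (i + 1) m))

variable (k : K)

/-- The value `α_r(ā, b̄)` of the `r`-th summand of the `2`-cocycle attached to `γ`. -/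
def aTerm {i j l : Q.V} (a : Q.Path i j) (b : Q.Path j l) (r : ZMod s) :
    Module.Dual K (TA K Q n PA) :=
  if (cls K Q n PA a ≠ 0 ∧ cls K Q n PA b ≠ 0 ∧ n ≤ (a.comp b).length ∧ (a.comp b).length < s ∧
      (a.comp b).sig = (seg Q s w x r (a.comp b).length).sig) then
    coordP K Q n PA basA
      ((seg Q s w x (r + ((a.comp b).length : ZMod s)) (s - (a.comp b).length)).sig)
  else if (cls K Q n PA a ≠ 0 ∧ cls K Q n PA b ≠ 0 ∧ (a.comp b).length = s ∧
      (a.comp b).sig = (seg Q s w x r s).sig) then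
    coordP K Q n PA basA ((QD.Path.nil (w r)).sig)
  else 0

variable (αm : TA K Q n PA →ₗ[K] TA K Q n PA →ₗ[K] Module.Dual K (TA K Q n PA))
variable (t : ℕ) (pM : Fin t → QD.PathIn Q)

/-- The ordinary quiver of the Hochschild extension algebra: the quiver `Δ` together with
one extra arrow `y_{p_m} : t(p_m) → s(p_m)` for every `m`. -/
abbrev Qe : QD where
  V := Q.V
  Ar := fun i j => Q.Ar i j ⊕ {m : Fin t // (pM m).2.1 = i ∧ (pM m).1 = j}

/-- The inclusion of paths of `Δ` into paths of the extended quiver. -/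
def embed : {i j : Q.V} → Q.Path i j → (Qe Q t pM).Path i j
  | _, _, QD.Path.nil i => QD.Path.nil (Q := Qe Q t pM) i
  | _, _, QD.Path.cons a p => QD.Path.cons (Q := Qe Q t pM) (Sum.inl a) (embed p)

/-- The number of `y`-arrows occurring in a path of the extended quiver. -/
def numY : {i j : Q.V} → (Qe Q t pM).Path i j → ℕ
  | _, _, QD.Path.nil _ => 0
  | i, _, @QD.Path.cons _ _ j' _ a p =>
      (match (a : Q.Ar i j' ⊕ {m : Fin t // (pM m).2.1 = i ∧ (pM m).1 = j'}) with
        | Sum.inl _ => 0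
        | Sum.inr _ => 1) + numY p

/-- The arrow `y_{p_m}` of the extended quiver. -/
def yArr (m : Fin t) : (Qe Q t pM).Ar (pM m).2.1 (pM m).1 := Sum.inr ⟨m, rfl, rfl⟩

/-- `C` is an `α`-revived cycle of `Δ`. -/
def IsRev {h : Q.V} (C : Q.Path h h) : Prop :=
  ∃ (j : Q.V) (a : Q.Path h j) (b : Q.Path j h),
    0 < a.length ∧ 0 < b.length ∧ cls K Q n PA a ≠ 0 ∧ cls K Q n PA b ≠ 0 ∧
    C = a.comp b ∧ αm (cls K Q n PA a) (cls K Q n PA b) ≠ 0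

/-- `C` is an `α`-revived cycle, viewed inside the extended quiver. -/
def IsRevE {h : Q.V} (C : (Qe Q t pM).Path h h) : Prop :=
  ∃ C₀ : Q.Path h h, C = embed Q t pM C₀ ∧ IsRev K Q n PA αm C₀

/-- `C` is an elementary cycle of weight `wt`. -/
def IsElemW {h : Q.V} (C : (Qe Q t pM).Path h h) (wt : K) : Prop :=
  ∃ (m : Fin t) (δ₂ : Q.Path h (pM m).2.1) (δ₁ : Q.Path (pM m).1 h),
    C = (embed Q t pM δ₂).comp (QD.Path.cons (yArr Q t pM m) (embed Q t pM δ₁)) ∧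
    coordP K Q n PA basA (pM m) (cls K Q n PA (δ₁.comp δ₂)) = wt ∧ wt ≠ 0

/-- `C` is an elementary cycle. -/
def IsElem {h : Q.V} (C : (Qe Q t pM).Path h h) : Prop :=
  ∃ wt : K, IsElemW K Q n PA basA t pM C wt

/-- `C` is a nonzero cycle (elementary or `α`-revived) with weight `wt`. -/
def HasWt {h : Q.V} (C : (Qe Q t pM).Path h h) (wt : K) : Prop :=
  IsElemW K Q n PA basA t pM C wt ∨ (IsRevE K Q n PA αm t pM C ∧ wt = k)

/-- The left action of `A` on `D(A) = Hom_K(A, K)`: `(a · f)(z) = f(z * a)`. -/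
def dL (a : TA K Q n PA) (f : Module.Dual K (TA K Q n PA)) : Module.Dual K (TA K Q n PA) :=
  f ∘ₗ LinearMap.mulRight K a

/-- The right action of `A` on `D(A) = Hom_K(A, K)`: `(f · b)(z) = f(b * z)`. -/
def dR (f : Module.Dual K (TA K Q n PA)) (b : TA K Q n PA) : Module.Dual K (TA K Q n PA) :=
  f ∘ₗ LinearMap.mulLeft K b

variable (T : Type) [Ring T] [Algebra K T]
variable (eT : T ≃ₗ[K] TA K Q n PA × Module.Dual K (TA K Q n PA))
variable (PB : PathAlg K (Qe Q t pM))
variable (Φm : PB.P →ₐ[K] T)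

/-- `φ₁ = π₁ ∘ Φ`. -/
def ph1 (z : PB.P) : TA K Q n PA := (eT (Φm z)).1

/-- `φ₂ = π₂ ∘ Φ`. -/
def ph2 (z : PB.P) : Module.Dual K (TA K Q n PA) := (eT (Φm z)).2

/-- The primitive idempotent of `T` corresponding to a vertex. -/
def eV (i : Q.V) : T := eT.symm (cls K Q n PA (QD.Path.nil i), 0)

end Main

section Extra

variable (K : Type) [Field K] (Q : QD) [Fintype Q.V] [∀ i j : Q.V, Fintype (Q.Ar i j)]
variable (n : ℕ) (PA : PathAlg K Q)
variable (t : ℕ) (pM : Fin t → QD.PathIn Q)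
variable (T : Type) [Ring T] [Algebra K T]
variable (PB : PathAlg K (Qe Q t pM))
variable (Φm : PB.P →ₐ[K] T)

/-- The Jacobson radical of a ring. -/
def JT : Ideal T := Ideal.jacobson ⊥

/-- The Jacobson radical, viewed as a `K`-subspace. -/
def JTK : Submodule K T := Submodule.restrictScalars K (JT T)

/-- The square of the Jacobson radical, as a `K`-subspace. -/
def J2K : Submodule K T := JTK K T * JTK K T

/-- The number of arrows `i → j` in the Gabriel (ordinary) quiver of `T`,
i.e. `dim_K e_i (rad T / rad² T) e_j`. -/
def gabrielCount (ei ej : T) : ℕ :=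
  Module.finrank K
      ↥(Submodule.span K {y : T | ∃ z ∈ JT T, y = ei * z * ej} ⊔ J2K K T)
    - Module.finrank K ↥(J2K K T)

/-- `e` is a primitive idempotent. -/
def IsPrimIdem (e : T) : Prop :=
  e * e = e ∧ e ≠ 0 ∧
  ∀ f g : T, f * f = f → g * g = g → f * g = 0 → g * f = 0 → e = f + g → f = 0 ∨ g = 0

/-- `a` is an arrow of the ring `T` in the sense of Brenner:
`a ∈ rad T \ rad² T` and `a = x a y` for primitive idempotents `x, y`. -/
def IsArrowT (a : T) : Prop :=
  a ∈ JT T ∧ a ∉ J2K K T ∧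
  ∃ e f : T, IsPrimIdem T e ∧ IsPrimIdem T f ∧ a = e * a * f

/-- `rad (T e)`, a left submodule. -/
def radLe (e : T) : Submodule T T := Submodule.span T ((fun z => z * e) '' (JT T : Set T))

/-- `rad (e T)`, a right submodule. -/
def radRe (e : T) : Submodule Tᵐᵒᵖ T := Submodule.span Tᵐᵒᵖ ((fun z => e * z) '' (JT T : Set T))

/-- `Λ` is a complete set of arrows for `rad (T e)`. -/
def CompleteL (e : T) (Λ : Set T) : Prop :=
  (∀ a ∈ Λ, IsArrowT K T a) ∧ Submodule.span T Λ = radLe T e ∧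
  ∀ Λ' ⊂ Λ, Submodule.span T Λ' ≠ radLe T e

/-- `Γ` is a complete set of arrows for `rad (e T)`. -/
def CompleteR (e : T) (Γ : Set T) : Prop :=
  (∀ a ∈ Γ, IsArrowT K T a) ∧ Submodule.span Tᵐᵒᵖ Γ = radRe T e ∧
  ∀ Γ' ⊂ Γ, Submodule.span Tᵐᵒᵖ Γ' ≠ radRe T e

/-- `(N, nn) ∈ 𝒩` in the sense of Brenner, for the primitive idempotent `e`. -/
def mcN (e : T) (N nn : ℕ) : Prop :=
  ∃ Λ Γ : Fin (nn + 1) → Set T,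
    (∀ i : Fin (nn + 1), (i : ℕ) ≠ 0 → (Λ i).Nonempty ∧ (Γ i).Nonempty) ∧
    (∀ i j : Fin (nn + 1), i ≠ j → Λ i ∩ Λ j = ∅ ∧ Γ i ∩ Γ j = ∅) ∧
    CompleteL K T e (⋃ i, Λ i) ∧ CompleteR K T e (⋃ i, Γ i) ∧
    (∀ i j : Fin (nn + 1), (i ≠ j ∨ (i : ℕ) = 0 ∨ (j : ℕ) = 0) →
      ∀ a ∈ Λ i, ∀ b ∈ Γ j, a * b = 0) ∧
    N = nn + (Λ 0).ncard

/-- The set `𝒞_h` of oriented cycles at `h` of the extended quiver that are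
nonzero in the Hochschild extension algebra. -/
def Ch (h : Q.V) : Type :=
  {C : (Qe Q t pM).Path h h // 0 < C.length ∧ Φm (PB.ι C) ≠ 0}

/-- The relation `ℛ` on `𝒞_h`: the two cycles share an arrow which starts or ends at `h`. -/
def Rc (h : Q.V) (C C' : Ch K Q t pM T PB Φm h) : Prop :=
  ∃ (u v : Q.V) (a : (Qe Q t pM).Ar u v), (u = h ∨ v = h) ∧
    QD.Path.arrowMem a C.1 ∧ QD.Path.arrowMem a C'.1

/-- `card (𝒞_h / ≡)`, the number of equivalence classes of `𝒞_h` under the equivalence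
relation generated by `ℛ`. -/
def NCh (h : Q.V) : ℕ := Nat.card (Quot (Rc K Q t pM T PB Φm h))

/-- The set `𝒜_h` of arrows of the extended quiver ending at `h`. -/
def Ah (h : Q.V) : Type := Σ u : Q.V, (Qe Q t pM).Ar u h

/-- The relation `ℛ'` on `𝒜_h`: there is an arrow `b` with `ab ≠ 0 ≠ a'b` in `T_α(A)`. -/
def Ra (h : Q.V) (a a' : Ah Q t pM h) : Prop :=
  ∃ (v : Q.V) (b : (Qe Q t pM).Ar h v),
    Φm (PB.ι (QD.Path.cons a.2 (QD.Path.cons b (QD.Path.nil (Q := Qe Q t pM) v)))) ≠ 0 ∧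
    Φm (PB.ι (QD.Path.cons a'.2 (QD.Path.cons b (QD.Path.nil (Q := Qe Q t pM) v)))) ≠ 0

/-- `card (𝒜_h / ≈)`. -/
def NAh (h : Q.V) : ℕ := Nat.card (Quot (Ra K Q t pM T PB Φm h))

end Extra

/-- An `R`-module is indecomposable if it is nonzero and is not the internal direct
sum of two nonzero submodules. -/
def Indec (R M : Type) [Ring R] [AddCommGroup M] [Module R M] : Prop :=
  (⊥ : Submodule R M) ≠ ⊤ ∧ ∀ p q : Submodule R M, IsCompl p q → p = ⊥ ∨ q = ⊥


section Statements

variable (K : Type) [Field K] (Q : QD) [Fintype Q.V] [∀ i j : Q.V, Fintype (Q.Ar i j)]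
variable (n : ℕ) (PA : PathAlg K Q)
variable (basA : Module.Basis (Short Q n) K (TA K Q n PA))
variable (s : ℕ) [NeZero s] (w : ZMod s → Q.V) (x : ∀ i : ZMod s, Q.Ar (w i) (w (i + 1)))
variable (k : K)
variable (αm : TA K Q n PA →ₗ[K] TA K Q n PA →ₗ[K] Module.Dual K (TA K Q n PA))
variable (t : ℕ) (pM : Fin t → QD.PathIn Q)
variable (T : Type) [Ring T] [Algebra K T]
variable (eT : T ≃ₗ[K] TA K Q n PA × Module.Dual K (TA K Q n PA))
variable (PB : PathAlg K (Qe Q t pM))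
variable (Φm : PB.P →ₐ[K] T)

/- ===================== auxiliary lemmas for stmt11 ===================== -/
set_option linter.unusedSectionVars false

theorem aux_length_comp {i j l : Q.V} (p : Q.Path i j) (q : Q.Path j l) :
    (p.comp q).length = p.length + q.length := by
  induction p with
  | nil => simp [QD.Path.comp, QD.Path.length]
  | cons a p ih =>
    show (p.comp q).length + 1 = (p.length + 1) + q.length
    rw [ih]; omega

theorem aux_cls_comp {i j l : Q.V} (p : Q.Path i j) (q : Q.Path j l) :
    cls K Q n PA (p.comp q) = cls K Q n PA p * cls K Q n PA q := by
  unfold cls; rw [PA.ι_comp, map_mul]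

theorem aux_cls_ortho {i j l m' : Q.V} (p : Q.Path i j) (q : Q.Path l m') (hjl : j ≠ l) :
    cls K Q n PA p * cls K Q n PA q = 0 := by
  unfold cls; rw [← map_mul, PA.ι_ortho p q hjl, map_zero]

theorem aux_cls_long {i j : Q.V} (p : Q.Path i j) (hl : n ≤ p.length) :
    cls K Q n PA p = 0 := by
  unfold cls
  have h : RingQuot.mkAlgHom K (truncRel K Q n PA) (PA.ι p)
      = RingQuot.mkAlgHom K (truncRel K Q n PA) 0 :=
    RingQuot.mkAlgHom_rel K ⟨rfl, ⟨⟨i, j, p⟩, hl, rfl⟩⟩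
  rw [h, map_zero]

theorem aux_cls_short
    (hbas : ∀ sp : Short Q n, basA sp = cls K Q n PA sp.1.2.2)
    {i j : Q.V} (p : Q.Path i j) (hp : p.length < n) :
    cls K Q n PA p = basA ⟨⟨i, j, p⟩, hp⟩ := (hbas ⟨⟨i, j, p⟩, hp⟩).symm

theorem aux_cls_short_ne
    (hbas : ∀ sp : Short Q n, basA sp = cls K Q n PA sp.1.2.2)
    {i j : Q.V} (p : Q.Path i j) (hp : p.length < n) :
    cls K Q n PA p ≠ 0 := by
  rw [aux_cls_short K Q n PA basA hbas p hp]; exact basA.ne_zero _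

theorem aux_cls_short_of_ne {i j : Q.V} (p : Q.Path i j) (hne : cls K Q n PA p ≠ 0) :
    p.length < n := by
  by_contra hge; push_neg at hge
  exact hne (aux_cls_long K Q n PA p hge)

theorem aux_no_short_cycle
    (hcyc : ∀ (i : Q.V) (p : Q.Path i i), 0 < p.length → cls K Q n PA p = 0)
    (hbas : ∀ sp : Short Q n, basA sp = cls K Q n PA sp.1.2.2)
    {h : Q.V} (p : Q.Path h h) (h1 : 0 < p.length) (h2 : p.length < n) : False := by
  have h0 := hcyc h p h1
  rw [aux_cls_short K Q n PA basA hbas p h2] at h0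
  exact basA.ne_zero _ h0

theorem aux_coord_kill
    (hbas : ∀ sp : Short Q n, basA sp = cls K Q n PA sp.1.2.2)
    {σ : QD.PathIn Q} (hσ : σ.2.2.length < n)
    {u v u2 v2 : Q.V} (q : Q.Path u v) (c : Q.Path u2 v2) (hlen : σ.2.2.length < c.length) :
    coordP K Q n PA basA σ (cls K Q n PA q * cls K Q n PA c) = 0 := by
  by_cases hvu : v = u2
  · subst hvu
    rw [← aux_cls_comp K Q n PA q c]
    by_cases hlong : (q.comp c).length < n
    · rw [aux_cls_short K Q n PA basA hbas _ hlong]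
      unfold coordP
      rw [dif_pos hσ, Module.Basis.coord_apply, Module.Basis.repr_self, Finsupp.single_apply, if_neg]
      intro hEq
      have hL := congrArg (fun z : Short Q n => z.1.2.2.length) hEq
      simp only [aux_length_comp] at hL
      omega
    · push_neg at hlong
      rw [aux_cls_long K Q n PA _ hlong, map_zero]
  · rw [aux_cls_ortho K Q n PA q c hvu, map_zero]

theorem aux_dL_zero_left (f : Module.Dual K (TA K Q n PA)) :
    dL K Q n PA 0 f = 0 := by
  unfold dL; ext z
  simp [LinearMap.mulRight_apply]

theorem aux_dL_zero_right (a : TA K Q n PA) : dL K Q n PA a 0 = 0 := by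
  unfold dL; exact LinearMap.zero_comp _

theorem aux_dR_zero_left (b : TA K Q n PA) : dR K Q n PA 0 b = 0 := by
  unfold dR; exact LinearMap.zero_comp _

theorem aux_dR_zero_right (f : Module.Dual K (TA K Q n PA)) :
    dR K Q n PA f 0 = 0 := by
  unfold dR; ext z
  simp [LinearMap.mulLeft_apply]

theorem aux_len_heq {a b c d : Q.V} (hac : a = c) (hbd : b = d)
    (p : Q.Path a b) (q : Q.Path c d) (hpq : HEq p q) : p.length = q.length := by
  subst hac; subst hbd; rw [eq_of_heq hpq]

theorem aux_seg_len : ∀ (m : ℕ) (r : ZMod s), (seg Q s w x r m).length = m := by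
  intro m
  induction m with
  | zero =>
    intro r
    have hh : HEq (seg Q s w x r 0) (QD.Path.nil (w r)) := by
      rw [seg]; exact cast_heq _ _
    rw [aux_len_heq Q rfl (congrArg w (by push_cast; ring)) _ _ hh]
    rfl
  | succ m ih =>
    intro r
    have hh : HEq (seg Q s w x r (m + 1))
        (QD.Path.cons (x r) (seg Q s w x (r + 1) m)) := by
      rw [seg]; exact cast_heq _ _
    rw [aux_len_heq Q rfl (congrArg w (by push_cast; ring)) _ _ hh]
    show (seg Q s w x (r + 1) m).length + 1 = m + 1
    rw [ih]

theorem aux_split_at : ∀ (ℓ : ℕ) {i j : Q.V} (p : Q.Path i j), ℓ ≤ p.length →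
    ∃ (u : Q.V) (a : Q.Path i u) (b : Q.Path u j), p = a.comp b ∧ a.length = ℓ := by
  intro ℓ
  induction ℓ with
  | zero => exact fun p _ => ⟨_, QD.Path.nil _, p, rfl, rfl⟩
  | succ ℓ ih =>
    intro i j p hp
    cases p with
    | nil => simp [QD.Path.length] at hp
    | cons a p =>
      obtain ⟨u, a2, b2, h1, h2⟩ := ih p (by
        have : (QD.Path.cons a p).length = p.length + 1 := rfl
        omega)
      exact ⟨u, QD.Path.cons a a2, b2, by rw [h1]; rfl, by
        show a2.length + 1 = ℓ + 1
        omega⟩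

theorem aux_embed_comp {i j l : Q.V} (p : Q.Path i j) (q : Q.Path j l) :
    embed Q t pM (p.comp q) = (embed Q t pM p).comp (embed Q t pM q) := by
  induction p with
  | nil => rfl
  | cons a p ih =>
    show QD.Path.cons (Sum.inl a) (embed Q t pM (p.comp q)) = QD.Path.cons _ _
    rw [ih]

theorem aux_embed_len {i j : Q.V} (p : Q.Path i j) :
    (embed Q t pM p).length = p.length := by
  induction p with
  | nil => rfl
  | cons a p ih =>
    show (embed Q t pM p).length + 1 = p.length + 1
    rw [ih]

theorem aux_numY_embed {i j : Q.V} (p : Q.Path i j) :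
    numY Q t pM (embed Q t pM p) = 0 := by
  induction p with
  | nil => rfl
  | cons a p ih =>
    show 0 + numY Q t pM (embed Q t pM p) = 0
    rw [ih]

/-- `eT ∘ Φ ∘ ι`, the two components of the image of a path of the extended quiver. -/
def Fc {i j : Q.V} (C : (Qe Q t pM).Path i j) :
    TA K Q n PA × Module.Dual K (TA K Q n PA) := eT (Φm (PB.ι C))

theorem aux_Phi_ne_iff {i j : Q.V} (C : (Qe Q t pM).Path i j) :
    Φm (PB.ι C) ≠ 0 ↔ Fc K Q n PA t pM T eT PB Φm C ≠ 0 := by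
  unfold Fc
  constructor
  · intro hne h0
    exact hne (eT.map_eq_zero_iff.mp h0)
  · intro hne h0
    exact hne (by rw [h0, map_zero])

theorem aux_F_comp
    (hTmul : ∀ u v : T, eT (u * v) = ((eT u).1 * (eT v).1,
      dL K Q n PA (eT u).1 (eT v).2 + dR K Q n PA (eT u).2 (eT v).1 + αm (eT u).1 (eT v).1))
    {i j l : Q.V} (P : (Qe Q t pM).Path i j) (R : (Qe Q t pM).Path j l) :
    Fc K Q n PA t pM T eT PB Φm (P.comp R) =
      ((Fc K Q n PA t pM T eT PB Φm P).1 * (Fc K Q n PA t pM T eT PB Φm R).1,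
        dL K Q n PA (Fc K Q n PA t pM T eT PB Φm P).1 (Fc K Q n PA t pM T eT PB Φm R).2
        + dR K Q n PA (Fc K Q n PA t pM T eT PB Φm P).2 (Fc K Q n PA t pM T eT PB Φm R).1
        + αm (Fc K Q n PA t pM T eT PB Φm P).1 (Fc K Q n PA t pM T eT PB Φm R).1) := by
  unfold Fc
  rw [PB.ι_comp, map_mul, hTmul]

theorem aux_F_nil
    (hΦnil : ∀ i : Q.V, Φm (PB.ι (QD.Path.nil (Q := Qe Q t pM) i))
      = eT.symm (cls K Q n PA (QD.Path.nil i), 0)) (i : Q.V) :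
    Fc K Q n PA t pM T eT PB Φm (QD.Path.nil (Q := Qe Q t pM) i)
      = (cls K Q n PA (QD.Path.nil i), 0) := by
  unfold Fc; rw [hΦnil, LinearEquiv.apply_symm_apply]

theorem aux_F_arrow
    (hΦarr : ∀ {i j : Q.V} (a : Q.Ar i j),
      Φm (PB.ι (QD.Path.cons (Sum.inl a) (QD.Path.nil (Q := Qe Q t pM) j)))
      = eT.symm (cls K Q n PA (QD.Path.cons a (QD.Path.nil j)), 0))
    {i j : Q.V} (a : Q.Ar i j) :
    Fc K Q n PA t pM T eT PB Φm (QD.Path.cons (Sum.inl a) (QD.Path.nil (Q := Qe Q t pM) j))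
      = (cls K Q n PA (QD.Path.cons a (QD.Path.nil j)), 0) := by
  unfold Fc; rw [hΦarr, LinearEquiv.apply_symm_apply]

theorem aux_F_y
    (hΦy : ∀ m : Fin t,
      Φm (PB.ι (QD.Path.cons (yArr Q t pM m) (QD.Path.nil (Q := Qe Q t pM) (pM m).1)))
      = eT.symm (0, coordP K Q n PA basA (pM m)))
    (m : Fin t) :
    Fc K Q n PA t pM T eT PB Φm
        (QD.Path.cons (yArr Q t pM m) (QD.Path.nil (Q := Qe Q t pM) (pM m).1))
      = (0, coordP K Q n PA basA (pM m)) := by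
  unfold Fc; rw [hΦy, LinearEquiv.apply_symm_apply]

theorem aux_embed_nil (i : Q.V) :
    embed Q t pM (QD.Path.nil i) = QD.Path.nil (Q := Qe Q t pM) i := rfl

theorem aux_embed_cons {i j l : Q.V} (a : Q.Ar i j) (p : Q.Path j l) :
    embed Q t pM (QD.Path.cons a p) = QD.Path.cons (Sum.inl a) (embed Q t pM p) := rfl

theorem aux_numY_cons_inl {i j l : Q.V} (a : Q.Ar i j) (p : (Qe Q t pM).Path j l) :
    numY Q t pM (QD.Path.cons (Sum.inl a) p) = numY Q t pM p := by
  show 0 + numY Q t pM p = numY Q t pM p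
  omega

theorem aux_numY_cons_inr {i j l : Q.V} (e : {m : Fin t // (pM m).2.1 = i ∧ (pM m).1 = j})
    (p : (Qe Q t pM).Path j l) :
    numY Q t pM (QD.Path.cons (Sum.inr e) p) = numY Q t pM p + 1 := by
  show 1 + numY Q t pM p = numY Q t pM p + 1
  omega

theorem aux_cls_nil_mul {i j : Q.V} (p : Q.Path i j) :
    cls K Q n PA (QD.Path.nil i) * cls K Q n PA p = cls K Q n PA p := by
  rw [← aux_cls_comp K Q n PA (QD.Path.nil i) p]
  rfl

theorem aux_g_eval (f : Module.Dual K (TA K Q n PA)) (a b z : TA K Q n PA) :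
    dL K Q n PA a (dR K Q n PA f b) z = f (b * (z * a)) := by
  simp [dL, dR]

theorem aux_F_cons
    (hTmul : ∀ u v : T, eT (u * v) = ((eT u).1 * (eT v).1,
      dL K Q n PA (eT u).1 (eT v).2 + dR K Q n PA (eT u).2 (eT v).1 + αm (eT u).1 (eT v).1))
    {i j l : Q.V} (a : (Qe Q t pM).Ar i j) (R : (Qe Q t pM).Path j l) :
    Fc K Q n PA t pM T eT PB Φm (QD.Path.cons a R) =
      ((Fc K Q n PA t pM T eT PB Φm (QD.Path.cons a (QD.Path.nil (Q := Qe Q t pM) j))).1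
          * (Fc K Q n PA t pM T eT PB Φm R).1,
        dL K Q n PA
            (Fc K Q n PA t pM T eT PB Φm (QD.Path.cons a (QD.Path.nil (Q := Qe Q t pM) j))).1
            (Fc K Q n PA t pM T eT PB Φm R).2
        + dR K Q n PA
            (Fc K Q n PA t pM T eT PB Φm (QD.Path.cons a (QD.Path.nil (Q := Qe Q t pM) j))).2
            (Fc K Q n PA t pM T eT PB Φm R).1
        + αm (Fc K Q n PA t pM T eT PB Φm (QD.Path.cons a (QD.Path.nil (Q := Qe Q t pM) j))).1
            (Fc K Q n PA t pM T eT PB Φm R).1) :=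
  aux_F_comp K Q n PA αm t pM T eT PB Φm hTmul (QD.Path.cons a (QD.Path.nil (Q := Qe Q t pM) j)) R

theorem aux_F_y'
    (hΦy : ∀ m : Fin t,
      Φm (PB.ι (QD.Path.cons (yArr Q t pM m) (QD.Path.nil (Q := Qe Q t pM) (pM m).1)))
      = eT.symm (0, coordP K Q n PA basA (pM m)))
    {i j : Q.V} (e : {m : Fin t // (pM m).2.1 = i ∧ (pM m).1 = j}) :
    Fc K Q n PA t pM T eT PB Φm
        (QD.Path.cons (Sum.inr e) (QD.Path.nil (Q := Qe Q t pM) j))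
      = (0, coordP K Q n PA basA (pM e.1)) := by
  obtain ⟨m, hm1, hm2⟩ := e
  subst hm1; subst hm2
  exact aux_F_y K Q n PA basA t pM T eT PB Φm hΦy m

theorem aux_fst_embed
    (hTmul : ∀ u v : T, eT (u * v) = ((eT u).1 * (eT v).1,
      dL K Q n PA (eT u).1 (eT v).2 + dR K Q n PA (eT u).2 (eT v).1 + αm (eT u).1 (eT v).1))
    (hΦnil : ∀ i : Q.V, Φm (PB.ι (QD.Path.nil (Q := Qe Q t pM) i))
      = eT.symm (cls K Q n PA (QD.Path.nil i), 0))
    (hΦarr : ∀ {i j : Q.V} (a : Q.Ar i j),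
      Φm (PB.ι (QD.Path.cons (Sum.inl a) (QD.Path.nil (Q := Qe Q t pM) j)))
      = eT.symm (cls K Q n PA (QD.Path.cons a (QD.Path.nil j)), 0))
    {i j : Q.V} (p : Q.Path i j) :
    (Fc K Q n PA t pM T eT PB Φm (embed Q t pM p)).1 = cls K Q n PA p := by
  induction p with
  | nil => rw [aux_embed_nil, aux_F_nil K Q n PA t pM T eT PB Φm hΦnil]
  | cons a p ih =>
    rw [aux_embed_cons, aux_F_cons K Q n PA αm t pM T eT PB Φm hTmul,
      aux_F_arrow K Q n PA t pM T eT PB Φm hΦarr a]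
    dsimp only
    rw [ih, ← aux_cls_comp K Q n PA]
    rfl

theorem aux_snd_embed_short
    (hbas : ∀ sp : Short Q n, basA sp = cls K Q n PA sp.1.2.2)
    (hs1 : n + 1 ≤ s)
    (hα : ∀ {i j l : Q.V} (a : Q.Path i j) (b : Q.Path j l),
      αm (cls K Q n PA a) (cls K Q n PA b) =
        k • ∑ r : ZMod s, aTerm K Q n PA basA s w x a b r)
    (hTmul : ∀ u v : T, eT (u * v) = ((eT u).1 * (eT v).1,
      dL K Q n PA (eT u).1 (eT v).2 + dR K Q n PA (eT u).2 (eT v).1 + αm (eT u).1 (eT v).1))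
    (hΦnil : ∀ i : Q.V, Φm (PB.ι (QD.Path.nil (Q := Qe Q t pM) i))
      = eT.symm (cls K Q n PA (QD.Path.nil i), 0))
    (hΦarr : ∀ {i j : Q.V} (a : Q.Ar i j),
      Φm (PB.ι (QD.Path.cons (Sum.inl a) (QD.Path.nil (Q := Qe Q t pM) j)))
      = eT.symm (cls K Q n PA (QD.Path.cons a (QD.Path.nil j)), 0))
    {i j : Q.V} (p : Q.Path i j) (hp : p.length < n) :
    (Fc K Q n PA t pM T eT PB Φm (embed Q t pM p)).2 = 0 := by
  induction p with
  | nil => rw [aux_embed_nil, aux_F_nil K Q n PA t pM T eT PB Φm hΦnil]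
  | cons a p ih =>
    have hp' : p.length + 1 < n := hp
    rw [aux_embed_cons, aux_F_cons K Q n PA αm t pM T eT PB Φm hTmul,
      aux_F_arrow K Q n PA t pM T eT PB Φm hΦarr a]
    dsimp only
    rw [ih (by omega), aux_fst_embed K Q n PA αm t pM T eT PB Φm hTmul hΦnil hΦarr p,
      aux_dL_zero_right, aux_dR_zero_left, hα (QD.Path.cons a (QD.Path.nil _)) p]
    have hz : ∀ r ∈ (Finset.univ : Finset (ZMod s)),
        aTerm K Q n PA basA s w x (QD.Path.cons a (QD.Path.nil _)) p r = 0 := by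
      intro r _
      unfold aTerm
      rw [if_neg, if_neg]
      · rintro ⟨-, -, hlen, -⟩
        rw [aux_length_comp] at hlen
        have h1 : (QD.Path.cons a (QD.Path.nil _)).length = 1 := rfl
        omega
      · rintro ⟨-, -, hlen, -⟩
        rw [aux_length_comp] at hlen
        have h1 : (QD.Path.cons a (QD.Path.nil _)).length = 1 := rfl
        omega
    rw [Finset.sum_eq_zero hz, smul_zero]
    simp

theorem aux_C
    (hbas : ∀ sp : Short Q n, basA sp = cls K Q n PA sp.1.2.2)
    (hn : 2 ≤ n) (hs2 : s ≤ 2 * n - 2)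
    (hα : ∀ {i j l : Q.V} (a : Q.Path i j) (b : Q.Path j l),
      αm (cls K Q n PA a) (cls K Q n PA b) =
        k • ∑ r : ZMod s, aTerm K Q n PA basA s w x a b r)
    {i1 j1 l1 u2 v2 : Q.V} (a' : Q.Path i1 j1) (b' : Q.Path j1 l1) (c : Q.Path u2 v2)
    (hlen : s < c.length + (a'.comp b').length) :
    (αm (cls K Q n PA a') (cls K Q n PA b')) ∘ₗ LinearMap.mulRight K (cls K Q n PA c) = 0 := by
  rw [hα a' b']
  apply basA.ext
  rintro ⟨⟨u, v, q⟩, hq⟩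
  rw [LinearMap.zero_apply, LinearMap.comp_apply, LinearMap.mulRight_apply,
    ← aux_cls_short K Q n PA basA hbas q hq, LinearMap.smul_apply, LinearMap.sum_apply]
  rw [Finset.sum_eq_zero, smul_zero]
  intro r _
  unfold aTerm
  split_ifs with h1 h2
  · obtain ⟨-, -, h1c, h1d, -⟩ := h1
    refine aux_coord_kill K Q n PA basA hbas ?_ q c ?_
    · show (seg Q s w x _ (s - (a'.comp b').length)).length < n
      rw [aux_seg_len Q s w x]
      omega
    · show (seg Q s w x _ (s - (a'.comp b').length)).length < c.length
      rw [aux_seg_len Q s w x]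
      omega
  · obtain ⟨-, -, h2c, -⟩ := h2
    refine aux_coord_kill K Q n PA basA hbas ?_ q c ?_
    · show (QD.Path.nil (w r)).length < n
      show 0 < n
      omega
    · show (QD.Path.nil (w r)).length < c.length
      show 0 < c.length
      omega
  · rfl

theorem aux_D
    (hbas : ∀ sp : Short Q n, basA sp = cls K Q n PA sp.1.2.2)
    (hn : 2 ≤ n) (hs1 : n + 1 ≤ s) (hs2 : s ≤ 2 * n - 2)
    (hα : ∀ {i j l : Q.V} (a : Q.Path i j) (b : Q.Path j l),
      αm (cls K Q n PA a) (cls K Q n PA b) =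
        k • ∑ r : ZMod s, aTerm K Q n PA basA s w x a b r)
    (hTmul : ∀ u v : T, eT (u * v) = ((eT u).1 * (eT v).1,
      dL K Q n PA (eT u).1 (eT v).2 + dR K Q n PA (eT u).2 (eT v).1 + αm (eT u).1 (eT v).1))
    (hΦnil : ∀ i : Q.V, Φm (PB.ι (QD.Path.nil (Q := Qe Q t pM) i))
      = eT.symm (cls K Q n PA (QD.Path.nil i), 0))
    (hΦarr : ∀ {i j : Q.V} (a : Q.Ar i j),
      Φm (PB.ι (QD.Path.cons (Sum.inl a) (QD.Path.nil (Q := Qe Q t pM) j)))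
      = eT.symm (cls K Q n PA (QD.Path.cons a (QD.Path.nil j)), 0)) :
    ∀ {u v : Q.V} (p : Q.Path u v), s < p.length →
      (Fc K Q n PA t pM T eT PB Φm (embed Q t pM p)).2 = 0 := by
  intro u v p
  induction p with
  | nil =>
    intro hcon
    exact absurd hcon (by simp [QD.Path.length])
  | cons a p ih =>
    intro hlen
    have hlc : (QD.Path.cons a p).length = p.length + 1 := rfl
    have hps : s ≤ p.length := by omega
    rw [aux_embed_cons, aux_F_cons K Q n PA αm t pM T eT PB Φm hTmul,
      aux_F_arrow K Q n PA t pM T eT PB Φm hΦarr a]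
    dsimp only
    rw [aux_fst_embed K Q n PA αm t pM T eT PB Φm hTmul hΦnil hΦarr p,
      aux_cls_long K Q n PA p (by omega), aux_dR_zero_left, map_zero]
    rcases Nat.lt_or_ge s p.length with hgt | hge
    · rw [ih hgt, aux_dL_zero_right]
      simp
    · have hps' : p.length = s := by omega
      obtain ⟨u', a2, b2, hsp, hla⟩ := aux_split_at Q (n - 1) p (by omega)
      have hcl : (a2.comp b2).length = s := by rw [← hsp]; exact hps'
      have hlb : b2.length = s - (n - 1) := by
        have h3 := aux_length_comp Q a2 b2
        rw [hcl] at h3; omega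
      have hpsi : (Fc K Q n PA t pM T eT PB Φm (embed Q t pM p)).2
          = αm (cls K Q n PA a2) (cls K Q n PA b2) := by
        rw [hsp, aux_embed_comp, aux_F_comp K Q n PA αm t pM T eT PB Φm hTmul]
        dsimp only
        rw [aux_fst_embed K Q n PA αm t pM T eT PB Φm hTmul hΦnil hΦarr a2,
          aux_fst_embed K Q n PA αm t pM T eT PB Φm hTmul hΦnil hΦarr b2,
          aux_snd_embed_short K Q n PA basA s w x k αm t pM T eT PB Φm hbas hs1 hα hTmul hΦnil
            hΦarr a2 (by omega),
          aux_snd_embed_short K Q n PA basA s w x k αm t pM T eT PB Φm hbas hs1 hα hTmul hΦnil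
            hΦarr b2 (by omega),
          aux_dL_zero_right, aux_dR_zero_left]
        simp
      rw [hpsi]
      have h1 : (QD.Path.cons a (QD.Path.nil _)).length = 1 := rfl
      have h0 : dL K Q n PA (cls K Q n PA (QD.Path.cons a (QD.Path.nil _)))
          (αm (cls K Q n PA a2) (cls K Q n PA b2)) = 0 :=
        aux_C K Q n PA basA s w x k αm hbas hn hs2 hα a2 b2
          (QD.Path.cons a (QD.Path.nil _)) (by omega)
      rw [h0]
      simp

theorem aux_F_elem
    (hTmul : ∀ u v : T, eT (u * v) = ((eT u).1 * (eT v).1,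
      dL K Q n PA (eT u).1 (eT v).2 + dR K Q n PA (eT u).2 (eT v).1 + αm (eT u).1 (eT v).1))
    (hΦnil : ∀ i : Q.V, Φm (PB.ι (QD.Path.nil (Q := Qe Q t pM) i))
      = eT.symm (cls K Q n PA (QD.Path.nil i), 0))
    (hΦarr : ∀ {i j : Q.V} (a : Q.Ar i j),
      Φm (PB.ι (QD.Path.cons (Sum.inl a) (QD.Path.nil (Q := Qe Q t pM) j)))
      = eT.symm (cls K Q n PA (QD.Path.cons a (QD.Path.nil j)), 0))
    (hΦy : ∀ m : Fin t,
      Φm (PB.ι (QD.Path.cons (yArr Q t pM m) (QD.Path.nil (Q := Qe Q t pM) (pM m).1)))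
      = eT.symm (0, coordP K Q n PA basA (pM m)))
    {h : Q.V} (m : Fin t) (δ₂ : Q.Path h (pM m).2.1) (δ₁ : Q.Path (pM m).1 h) :
    Fc K Q n PA t pM T eT PB Φm
        ((embed Q t pM δ₂).comp (QD.Path.cons (yArr Q t pM m) (embed Q t pM δ₁)))
      = (0, dL K Q n PA (cls K Q n PA δ₂)
            (dR K Q n PA (coordP K Q n PA basA (pM m)) (cls K Q n PA δ₁))) := by
  have hy : Fc K Q n PA t pM T eT PB Φm (QD.Path.cons (yArr Q t pM m) (embed Q t pM δ₁))
      = (0, dR K Q n PA (coordP K Q n PA basA (pM m)) (cls K Q n PA δ₁)) := by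
    rw [aux_F_cons K Q n PA αm t pM T eT PB Φm hTmul (yArr Q t pM m) (embed Q t pM δ₁),
      aux_F_y K Q n PA basA t pM T eT PB Φm hΦy m]
    dsimp only
    rw [aux_fst_embed K Q n PA αm t pM T eT PB Φm hTmul hΦnil hΦarr δ₁, aux_dL_zero_left]
    simp
  rw [aux_F_comp K Q n PA αm t pM T eT PB Φm hTmul, hy]
  dsimp only
  rw [aux_fst_embed K Q n PA αm t pM T eT PB Φm hTmul hΦnil hΦarr δ₂, aux_dR_zero_right]
  simp

theorem aux_numY_zero : ∀ {i j : (Qe Q t pM).V} (C : (Qe Q t pM).Path i j), numY Q t pM C = 0 →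
    ∃ C0 : Q.Path i j, C = embed Q t pM C0 := by
  intro i j C
  induction C with
  | nil => exact fun _ => ⟨QD.Path.nil _, rfl⟩
  | cons a p ih =>
    intro hC
    cases a with
    | inl a' =>
      rw [aux_numY_cons_inl] at hC
      obtain ⟨C0, hC0⟩ := ih hC
      exact ⟨QD.Path.cons a' C0, by rw [hC0]; rfl⟩
    | inr e =>
      rw [aux_numY_cons_inr] at hC
      omega

theorem aux_numY_one : ∀ {i j : (Qe Q t pM).V} (C : (Qe Q t pM).Path i j), numY Q t pM C = 1 →
    ∃ (m : Fin t) (δ₂ : Q.Path i (pM m).2.1) (δ₁ : Q.Path (pM m).1 j),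
      C = (embed Q t pM δ₂).comp (QD.Path.cons (yArr Q t pM m) (embed Q t pM δ₁)) := by
  intro i j C
  induction C with
  | nil => intro hC; exact absurd hC (by simp [numY])
  | cons a p ih =>
    intro hC
    cases a with
    | inl a' =>
      rw [aux_numY_cons_inl] at hC
      obtain ⟨m, δ₂, δ₁, hp⟩ := ih hC
      exact ⟨m, QD.Path.cons a' δ₂, δ₁, by rw [hp]; rfl⟩
    | inr e =>
      rw [aux_numY_cons_inr] at hC
      obtain ⟨C0, hC0⟩ := aux_numY_zero Q t pM p (by omega)
      obtain ⟨m, hm1, hm2⟩ := e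
      subst hm1; subst hm2
      exact ⟨m, QD.Path.nil _, C0, by rw [hC0]; rfl⟩

theorem aux_fst_y1
    (hTmul : ∀ u v : T, eT (u * v) = ((eT u).1 * (eT v).1,
      dL K Q n PA (eT u).1 (eT v).2 + dR K Q n PA (eT u).2 (eT v).1 + αm (eT u).1 (eT v).1))
    (hΦy : ∀ m : Fin t,
      Φm (PB.ι (QD.Path.cons (yArr Q t pM m) (QD.Path.nil (Q := Qe Q t pM) (pM m).1)))
      = eT.symm (0, coordP K Q n PA basA (pM m))) :
    ∀ {i j : (Qe Q t pM).V} (C : (Qe Q t pM).Path i j), 1 ≤ numY Q t pM C →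
      (Fc K Q n PA t pM T eT PB Φm C).1 = 0 := by
  intro i j C
  induction C with
  | nil => intro hcon; exact absurd hcon (by simp [numY])
  | cons a p ih =>
    intro h1
    cases a with
    | inl a' =>
      rw [aux_numY_cons_inl] at h1
      rw [aux_F_cons K Q n PA αm t pM T eT PB Φm hTmul]
      dsimp only
      rw [ih h1, mul_zero]
    | inr e =>
      rw [aux_F_cons K Q n PA αm t pM T eT PB Φm hTmul,
        aux_F_y' K Q n PA basA t pM T eT PB Φm hΦy e]
      dsimp only
      rw [zero_mul]

theorem aux_numY_two
    (hTmul : ∀ u v : T, eT (u * v) = ((eT u).1 * (eT v).1,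
      dL K Q n PA (eT u).1 (eT v).2 + dR K Q n PA (eT u).2 (eT v).1 + αm (eT u).1 (eT v).1))
    (hΦy : ∀ m : Fin t,
      Φm (PB.ι (QD.Path.cons (yArr Q t pM m) (QD.Path.nil (Q := Qe Q t pM) (pM m).1)))
      = eT.symm (0, coordP K Q n PA basA (pM m))) :
    ∀ {i j : (Qe Q t pM).V} (C : (Qe Q t pM).Path i j), 2 ≤ numY Q t pM C →
      Φm (PB.ι C) = 0 := by
  intro i j C
  induction C with
  | nil => intro hcon; exact absurd hcon (by simp [numY])
  | cons a p ih =>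
    intro h2
    cases a with
    | inl a' =>
      rw [aux_numY_cons_inl] at h2
      have hsplit : PB.ι (QD.Path.cons (Sum.inl a') p)
          = PB.ι (QD.Path.cons (Sum.inl a') (QD.Path.nil _)) * PB.ι p :=
        PB.ι_comp (QD.Path.cons (Sum.inl a') (QD.Path.nil _)) p
      rw [hsplit, map_mul, ih h2, mul_zero]
    | inr e =>
      rw [aux_numY_cons_inr] at h2
      have hF : Fc K Q n PA t pM T eT PB Φm (QD.Path.cons (Sum.inr e) p) = 0 := by
        rw [aux_F_cons K Q n PA αm t pM T eT PB Φm hTmul,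
          aux_F_y' K Q n PA basA t pM T eT PB Φm hΦy e]
        dsimp only
        rw [aux_fst_y1 K Q n PA basA αm t pM T eT PB Φm hTmul hΦy p (by omega),
          aux_dL_zero_left, aux_dR_zero_right]
        simp [Prod.ext_iff]
      exact eT.map_eq_zero_iff.mp hF

/-- an oriented cycle of the extended quiver is nonzero in `T_α(A)` if and
only if it is an elementary cycle or an `α`-revived cycle. -/
theorem stmt11
    [IsAlgClosed K]
    (hn : 2 ≤ n)
    (hdim : 1 < Module.finrank K (TA K Q n PA))
    (hconn : ∀ i j : Q.V,
      Relation.EqvGen (fun u v : Q.V => Nonempty (Q.Ar u v) ∨ Nonempty (Q.Ar v u)) i j)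
    (hcyc : ∀ (i : Q.V) (p : Q.Path i i), 0 < p.length → cls K Q n PA p = 0)
    (hbas : ∀ sp : Short Q n, basA sp = cls K Q n PA sp.1.2.2)
    (hs1 : n + 1 ≤ s) (hs2 : s ≤ 2 * n - 2)
    (hk : k ≠ 0)
    (hα : ∀ {i j l : Q.V} (a : Q.Path i j) (b : Q.Path j l),
      αm (cls K Q n PA a) (cls K Q n PA b) =
        k • ∑ r : ZMod s, aTerm K Q n PA basA s w x a b r)
    (hcoc : ∀ a b c : TA K Q n PA,
      dL K Q n PA a (αm b c) + αm a (b * c) = αm (a * b) c + dR K Q n PA (αm a b) c)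
    (hMlt : ∀ m : Fin t, (pM m).2.2.length < n)
    (hMli : LinearIndependent K fun m : Fin t => cls K Q n PA (pM m).2.2)
    (hMsp : Submodule.span K (Set.range fun m : Fin t => cls K Q n PA (pM m).2.2)
      = socA K Q n PA)
    (hTmul : ∀ u v : T, eT (u * v) = ((eT u).1 * (eT v).1,
      dL K Q n PA (eT u).1 (eT v).2 + dR K Q n PA (eT u).2 (eT v).1 + αm (eT u).1 (eT v).1))
    (hTone : eT 1 = (1, 0))
    (hΦnil : ∀ i : Q.V, Φm (PB.ι (QD.Path.nil (Q := Qe Q t pM) i))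
      = eT.symm (cls K Q n PA (QD.Path.nil i), 0))
    (hΦarr : ∀ {i j : Q.V} (a : Q.Ar i j),
      Φm (PB.ι (QD.Path.cons (Sum.inl a) (QD.Path.nil (Q := Qe Q t pM) j)))
      = eT.symm (cls K Q n PA (QD.Path.cons a (QD.Path.nil j)), 0))
    (hΦy : ∀ m : Fin t,
      Φm (PB.ι (QD.Path.cons (yArr Q t pM m) (QD.Path.nil (Q := Qe Q t pM) (pM m).1)))
      = eT.symm (0, coordP K Q n PA basA (pM m)))
    (hΦsurj : Function.Surjective Φm)
    {h : Q.V} (C : (Qe Q t pM).Path h h) (hC : 0 < C.length) :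
    Φm (PB.ι C) ≠ 0 ↔
      (IsElem K Q n PA basA t pM C ∨ IsRevE K Q n PA αm t pM C) := by
  rw [aux_Phi_ne_iff K Q n PA t pM T eT PB Φm C]
  constructor
  · intro hFne
    rcases Nat.lt_or_ge (numY Q t pM C) 1 with h0 | h1
    · -- no `y`-arrows: α-revived
      right
      obtain ⟨C0, hC0⟩ := aux_numY_zero Q t pM C (by omega)
      have hlen0 : 0 < C0.length := by
        rw [hC0, aux_embed_len Q t pM C0] at hC; exact hC
      have hfst : (Fc K Q n PA t pM T eT PB Φm C).1 = 0 := by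
        rw [hC0, aux_fst_embed K Q n PA αm t pM T eT PB Φm hTmul hΦnil hΦarr C0]
        exact hcyc h C0 hlen0
      have hsnd : (Fc K Q n PA t pM T eT PB Φm C).2 ≠ 0 := by
        intro h2
        apply hFne
        have hP : Fc K Q n PA t pM T eT PB Φm C
            = ((Fc K Q n PA t pM T eT PB Φm C).1, (Fc K Q n PA t pM T eT PB Φm C).2) := rfl
        rw [hP, hfst, h2]
        rfl
      have hms : C0.length ≤ s := by
        by_contra hgt
        push_neg at hgt
        refine hsnd ?_
        rw [hC0]
        exact aux_D K Q n PA basA s w x k αm t pM T eT PB Φm hbas hn hs1 hs2 hα hTmul hΦnil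
          hΦarr C0 hgt
      have hmn : n ≤ C0.length := by
        by_contra hlt
        push_neg at hlt
        refine hsnd ?_
        rw [hC0]
        exact aux_snd_embed_short K Q n PA basA s w x k αm t pM T eT PB Φm hbas hs1 hα hTmul
          hΦnil hΦarr C0 hlt
      obtain ⟨u, a, b, hsp, hla⟩ := aux_split_at Q (C0.length - (n - 1)) C0 (by omega)
      have hlab := aux_length_comp Q a b
      rw [← hsp] at hlab
      have hla' : a.length < n := by omega
      have hlb' : b.length < n := by omega
      have hpa : 0 < a.length := by omega
      have hpb : 0 < b.length := by omega
      have hpsi : (Fc K Q n PA t pM T eT PB Φm C).2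
          = αm (cls K Q n PA a) (cls K Q n PA b) := by
        rw [hC0, hsp, aux_embed_comp Q t pM a b, aux_F_comp K Q n PA αm t pM T eT PB Φm hTmul]
        dsimp only
        rw [aux_fst_embed K Q n PA αm t pM T eT PB Φm hTmul hΦnil hΦarr a,
          aux_fst_embed K Q n PA αm t pM T eT PB Φm hTmul hΦnil hΦarr b,
          aux_snd_embed_short K Q n PA basA s w x k αm t pM T eT PB Φm hbas hs1 hα hTmul hΦnil
            hΦarr a hla',
          aux_snd_embed_short K Q n PA basA s w x k αm t pM T eT PB Φm hbas hs1 hα hTmul hΦnil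
            hΦarr b hlb',
          aux_dL_zero_right, aux_dR_zero_left]
        simp
      exact ⟨C0, hC0, u, a, b, hpa, hpb,
        aux_cls_short_ne K Q n PA basA hbas a hla',
        aux_cls_short_ne K Q n PA basA hbas b hlb',
        hsp, by rw [← hpsi]; exact hsnd⟩
    rcases Nat.lt_or_ge (numY Q t pM C) 2 with h1' | h2
    · -- exactly one `y`-arrow: elementary
      left
      obtain ⟨m, δ₂, δ₁, hform⟩ := aux_numY_one Q t pM C (by omega)
      have hFel := aux_F_elem K Q n PA basA αm t pM T eT PB Φm hTmul hΦnil hΦarr hΦy m δ₂ δ₁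
      have hg : dL K Q n PA (cls K Q n PA δ₂)
          (dR K Q n PA (coordP K Q n PA basA (pM m)) (cls K Q n PA δ₁)) ≠ 0 := by
        intro hz
        apply hFne
        rw [hform, hFel, hz]
        rfl
      have hex : ∃ idx : Short Q n, dL K Q n PA (cls K Q n PA δ₂)
          (dR K Q n PA (coordP K Q n PA basA (pM m)) (cls K Q n PA δ₁)) (basA idx) ≠ 0 := by
        by_contra hall
        push_neg at hall
        refine hg (basA.ext fun idx => ?_)
        rw [hall idx, LinearMap.zero_apply]
      obtain ⟨⟨⟨u, v, q⟩, hq⟩, hgx⟩ := hex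
      rw [show basA ⟨⟨u, v, q⟩, hq⟩ = cls K Q n PA q from
        (aux_cls_short K Q n PA basA hbas q hq).symm] at hgx
      rw [aux_g_eval K Q n PA (coordP K Q n PA basA (pM m)) (cls K Q n PA δ₂)
        (cls K Q n PA δ₁) (cls K Q n PA q)] at hgx
      by_cases hv : h = v
      · subst hv
        by_cases hu : h = u
        · subst hu
          cases q with
          | nil =>
            rw [aux_cls_nil_mul K Q n PA δ₂, ← aux_cls_comp K Q n PA δ₁ δ₂] at hgx
            exact ⟨_, m, δ₂, δ₁, hform, rfl, hgx⟩
          | cons a' p' =>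
            exfalso
            have hq0 : cls K Q n PA (QD.Path.cons a' p') = 0 :=
              hcyc h _ (by show 0 < p'.length + 1; omega)
            rw [hq0] at hgx
            simp at hgx
        · exfalso
          rw [← aux_cls_comp K Q n PA q δ₂,
            aux_cls_ortho K Q n PA δ₁ (q.comp δ₂) hu] at hgx
          exact hgx (map_zero _)
      · exfalso
        rw [aux_cls_ortho K Q n PA q δ₂ (fun hh => hv hh.symm), mul_zero, map_zero] at hgx
        exact hgx rfl
    · -- at least two `y`-arrows: impossible
      exact absurd (show Fc K Q n PA t pM T eT PB Φm C = 0 from by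
        unfold Fc
        rw [aux_numY_two K Q n PA basA αm t pM T eT PB Φm hTmul hΦy C h2, map_zero]) hFne
  · rintro (⟨wt, m, δ₂, δ₁, hform, hcoord, hwt⟩ |
      ⟨C0, hC0, u, a, b, hpa, hpb, hca, hcb, hab, hαne⟩)
    · intro hF0
      have hFel := aux_F_elem K Q n PA basA αm t pM T eT PB Φm hTmul hΦnil hΦarr hΦy m δ₂ δ₁
      rw [hform, hFel] at hF0
      have hg0 : dL K Q n PA (cls K Q n PA δ₂)
          (dR K Q n PA (coordP K Q n PA basA (pM m)) (cls K Q n PA δ₁)) = 0 :=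
        congrArg Prod.snd hF0
      have hev := aux_g_eval K Q n PA (coordP K Q n PA basA (pM m)) (cls K Q n PA δ₂)
        (cls K Q n PA δ₁) (cls K Q n PA (QD.Path.nil h))
      rw [hg0, LinearMap.zero_apply, aux_cls_nil_mul K Q n PA δ₂,
        ← aux_cls_comp K Q n PA δ₁ δ₂, hcoord] at hev
      exact hwt hev.symm
    · intro hF0
      have hsa : a.length < n := aux_cls_short_of_ne K Q n PA a hca
      have hsb : b.length < n := aux_cls_short_of_ne K Q n PA b hcb
      apply hαne
      have hpsi : (Fc K Q n PA t pM T eT PB Φm C).2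
          = αm (cls K Q n PA a) (cls K Q n PA b) := by
        rw [hC0, hab, aux_embed_comp Q t pM a b, aux_F_comp K Q n PA αm t pM T eT PB Φm hTmul]
        dsimp only
        rw [aux_fst_embed K Q n PA αm t pM T eT PB Φm hTmul hΦnil hΦarr a,
          aux_fst_embed K Q n PA αm t pM T eT PB Φm hTmul hΦnil hΦarr b,
          aux_snd_embed_short K Q n PA basA s w x k αm t pM T eT PB Φm hbas hs1 hα hTmul hΦnil
            hΦarr a hsa,
          aux_snd_embed_short K Q n PA basA s w x k αm t pM T eT PB Φm hbas hs1 hα hTmul hΦnil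
            hΦarr b hsb,
          aux_dL_zero_right, aux_dR_zero_left]
        simp
      rw [← hpsi, hF0]
      rfl

end Statements
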